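/- arXiv:2511.03520 — 3 statements merged into one kernel-verified Lean document; each statement's English description precedes it below -/
import Mathlib

section
/- Let V be a real normed vector space, N a natural number, and e : Fin N → V a linearly independent family. Consider the translation action Φ(g,x) = x + ∑_i g i • e i of the additive group ℝ^N on V. Then: (i) the action is free, i.e., if x + ∑_i g i • e i = x for some x ∈ V and g : Fin N → ℝ, then g = 0; and (ii) the action is proper in the sequential sense: if a sequence (xₙ) converges to some x in V and the sequence (xₙ + ∑_i gₙ i • e i) converges to some y in V, then the sequence (gₙ) converges in Fin N → ℝ (equivalently, each coordinate sequence gₙ i converges in ℝ). -/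
open Filter Topology

/-! The map `g ↦ ∑ i, g i • e i` is an injective linear map on the finite-dimensional space
`Fin N → ℝ`, hence a closed embedding. Freeness is its injectivity; for properness, the images
`∑ i, gₙ i • e i = Φ(gₙ, xₙ) - xₙ` converge to `y - x`, which lies in the closed range, and an
embedding reflects this convergence back to `gₙ`. -/

theorem Topology.IsClosedEmbedding.exists_tendsto_of_tendsto_comp {α X Y : Type*}
    [TopologicalSpace X] [TopologicalSpace Y] {f : X → Y} (hf : IsClosedEmbedding f)
    {l : Filter α} [l.NeBot] {u : α → X} {y : Y} (h : Tendsto (f ∘ u) l (𝓝 y)) :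
    ∃ x, Tendsto u l (𝓝 x) := by
  obtain ⟨x, rfl⟩ : y ∈ Set.range f :=
    hf.isClosed_range.mem_of_tendsto h (Eventually.of_forall fun _ => Set.mem_range_self _)
  exact ⟨x, hf.tendsto_nhds_iff.mpr h⟩

theorem LinearIndependent.isClosedEmbedding_fintypeLinearCombination {ι 𝕜 E : Type*}
    [Fintype ι] [NontriviallyNormedField 𝕜] [CompleteSpace 𝕜] [AddCommGroup E]
    [Module 𝕜 E] [TopologicalSpace E] [IsTopologicalAddGroup E] [ContinuousSMul 𝕜 E]
    [T2Space E] {v : ι → E} (hv : LinearIndependent 𝕜 v) :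
    IsClosedEmbedding (Fintype.linearCombination 𝕜 v) :=
  LinearMap.isClosedEmbedding_of_injective
    (LinearMap.ker_eq_bot.mpr hv.fintypeLinearCombination_injective)

/-- For a linearly independent family `e : Fin N → V` in a real normed vector space,
the translation action `Φ(g,x) = x + ∑ i, g i • e i` of the additive group `ℝ^N` on `V`
is free, and proper in the sequential sense: convergence of `xₙ` and of `Φ(gₙ, xₙ)`
forces convergence of the group elements `gₙ`. -/
theorem translation_action_free_and_proper
    (V : Type*) [NormedAddCommGroup V] [NormedSpace ℝ V]
    (N : ℕ) (e : Fin N → V) (he : LinearIndependent ℝ e) :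
    (∀ (x : V) (g : Fin N → ℝ), x + ∑ i, g i • e i = x → g = 0) ∧
    (∀ (xseq : ℕ → V) (gseq : ℕ → Fin N → ℝ) (x y : V),
      Tendsto xseq atTop (𝓝 x) →
      Tendsto (fun n => xseq n + ∑ i, gseq n i • e i) atTop (𝓝 y) →
      ∃ g : Fin N → ℝ, Tendsto gseq atTop (𝓝 g)) := by
  have hL : IsClosedEmbedding fun g : Fin N → ℝ => ∑ i, g i • e i :=
    he.isClosedEmbedding_fintypeLinearCombination
  refine ⟨fun x g hg => hL.injective ?_, fun xseq gseq x y hx hy => ?_⟩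
  · simpa using hg
  · refine hL.exists_tendsto_of_tendsto_comp (y := y - x) ?_
    simpa only [Function.comp_def, add_sub_cancel_left] using hy.sub hx
end

section
/- Fix n ∈ ℕ, x₀ : Fin n → ℝ, curves g, h : ℝ → Matrix (Fin n) (Fin n) ℝ, and maps ρG, ρH : (Fin n → ℝ) → Matrix (Fin n) (Fin n) ℝ. Define x̄(t) = g(t) *ᵥ (h(t) *ᵥ x₀). Suppose that for every t: (i) g has derivative ρG(x̄(t)) * g(t) at t; (ii) h has derivative ρH(x̄(t)) * h(t) at t; and (iii) g(t) commutes with ρH(x̄(t)), i.e., g(t) * ρH(x̄(t)) = ρH(x̄(t)) * g(t). Then for every t, x̄ has derivative ρG(x̄(t)) *ᵥ x̄(t) + ρH(x̄(t)) *ᵥ x̄(t) at t. -/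
/-!
Since `x̄ = (g h) x₀`, the product rule gives `x̄' = (ρG g h + g ρH h) x₀`; commuting `g` past
`ρH` turns the second term into `ρH x̄`.
-/

open Matrix

-- All norms on the finite-dimensional space of matrices give the same derivatives.
attribute [local instance] Matrix.linftyOpNormedRing Matrix.linftyOpNormedAlgebra

theorem HasDerivAt.mulVec_const {𝕜 : Type*} [NontriviallyNormedField 𝕜] [CompleteSpace 𝕜]
    {ι : Type*} [Fintype ι] [DecidableEq ι] {M : 𝕜 → Matrix ι ι 𝕜} {M' : Matrix ι ι 𝕜} {t : 𝕜}
    (hM : HasDerivAt M M' t) (v : ι → 𝕜) : HasDerivAt (fun s => M s *ᵥ v) (M' *ᵥ v) t :=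
  let evalAt : Matrix ι ι 𝕜 →L[𝕜] ι → 𝕜 :=
    LinearMap.toContinuousLinearMap (LinearMap.applyₗ v ∘ₗ Matrix.toLin'.toLinearMap)
  evalAt.hasFDerivAt.comp_hasDerivAt t hM

theorem Matrix.mul_add_mul_mulVec_of_commute {ι R : Type*} [Fintype ι] [Semiring R]
    {A B g h : Matrix ι ι R} (hgB : Commute g B) (v : ι → R) :
    (A * g * h + g * (B * h)) *ᵥ v = A *ᵥ (g *ᵥ h *ᵥ v) + B *ᵥ (g *ᵥ h *ᵥ v) := by
  rw [← mul_assoc, hgB.eq, add_mulVec]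
  simp only [mulVec_mulVec, mul_assoc]

/-- Product reconstruction for linear matrix actions on `ℝⁿ`: if `ġ = ρG(xbar)·g`,
`ḣ = ρH(xbar)·h`, the actions commute along the trajectory, and
`xbar(t) = g(t) *ᵥ (h(t) *ᵥ x₀)`, then `xbar` is an integral curve of the product
approximated dynamics `ρG(xbar) *ᵥ xbar + ρH(xbar) *ᵥ xbar`. -/
theorem product_reconstruction_linear
    (n : ℕ) (x₀ : Fin n → ℝ)
    (g h : ℝ → Matrix (Fin n) (Fin n) ℝ)
    (ρG ρH : (Fin n → ℝ) → Matrix (Fin n) (Fin n) ℝ)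
    (xbar : ℝ → Fin n → ℝ) (hxbar : ∀ t, xbar t = g t *ᵥ (h t *ᵥ x₀))
    (hg : ∀ t, HasDerivAt g (ρG (xbar t) * g t) t)
    (hh : ∀ t, HasDerivAt h (ρH (xbar t) * h t) t)
    (hcomm : ∀ t, g t * ρH (xbar t) = ρH (xbar t) * g t) :
    ∀ t, HasDerivAt xbar (ρG (xbar t) *ᵥ xbar t + ρH (xbar t) *ᵥ xbar t) t := by
  intro t
  have hderiv := ((hg t).mul (hh t)).mulVec_const x₀
  rw [mul_add_mul_mulVec_of_commute (hcomm t) x₀, ← hxbar t] at hderiv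
  exact hderiv.congr_of_eventuallyEq (.of_forall fun s => by rw [hxbar s, mulVec_mulVec]; rfl)
end

section
/- Let G and H be groups, each with a left action on a set M (written g • x and h • x), with no commutativity assumed. On the augmented set G × M, define Φ̃_G(g₂, (g₁, x)) := (g₂·g₁, g₂ • x) and Φ̃_H(h, (g, x)) := (g, g • (h • (g⁻¹ • x))). Then: (i) Φ̃_G is a left action of G on G × M; (ii) Φ̃_H is a left action of H on G × M; and (iii) the two actions commute: Φ̃_G(g₂, Φ̃_H(h, (g₁, x))) = Φ̃_H(h, Φ̃_G(g₂, (g₁, x))) for all g₂ ∈ G, h ∈ H, g₁ ∈ G, x ∈ M. -/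
/-- Any two left actions of groups `G` and `H` on a set `M` lift to commuting left
actions on the `G`-augmented set `G × M`, via
`Φ̃G(g₂, (g₁, x)) = (g₂·g₁, g₂ • x)` and `Φ̃H(h, (g, x)) = (g, g • (h • (g⁻¹ • x)))`. -/
theorem augmented_actions_commute
    (G H M : Type*) [Group G] [Group H] [MulAction G M] [MulAction H M]
    (ΦG : G → G × M → G × M) (ΦH : H → G × M → G × M)
    (hΦG : ∀ (g₂ : G) (p : G × M), ΦG g₂ p = (g₂ * p.1, g₂ • p.2))
    (hΦH : ∀ (h : H) (p : G × M), ΦH h p = (p.1, p.1 • (h • (p.1⁻¹ • p.2)))) :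
    (∀ p : G × M, ΦG 1 p = p) ∧
    (∀ (g₁ g₂ : G) (p : G × M), ΦG (g₁ * g₂) p = ΦG g₁ (ΦG g₂ p)) ∧
    (∀ p : G × M, ΦH 1 p = p) ∧
    (∀ (h₁ h₂ : H) (p : G × M), ΦH (h₁ * h₂) p = ΦH h₁ (ΦH h₂ p)) ∧
    (∀ (g₂ : G) (h : H) (p : G × M), ΦG g₂ (ΦH h p) = ΦH h (ΦG g₂ p)) := by
  refine ⟨?_, ?_, ?_, ?_, ?_⟩
  · intro p; simp [hΦG]
  · intro g₁ g₂ p; simp [hΦG, mul_assoc, mul_smul]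
  · intro p; simp [hΦH]
  · intro h₁ h₂ p; simp [hΦH, mul_smul]
  · intro g₂ h p
    simp only [hΦG, hΦH]
    refine Prod.ext rfl ?_
    simp [smul_smul, mul_assoc]
end
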